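/- Let H be a real symmetric N_g × N_g matrix with orthonormal eigenvectors ψ_1, …, ψ_{N_g} and eigenvalues ε_1 ≤ … ≤ ε_{N_g}, let 1 ≤ N_e < N_g with gap ε_{N_e+1} − ε_{N_e} > 0, set Q = I − Σ_{i=1}^{N_e} ψ_i ψ_iᵀ, and let χ₀ = 2 Σ_{i=1}^{N_e} Σ_{j=N_e+1}^{N_g} (ε_i − ε_j)^{-1} (ψ_i ⊙ ψ_j)(ψ_i ⊙ ψ_j)ᵀ. Let g_1, …, g_m ∈ ℝ^{N_g}, let r_1, …, r_{N_μ} be indices in {1, …, N_g}, and let ξ_1, …, ξ_{N_μ} ∈ ℝ^{N_g} be interpolation vectors such that the interpolative decomposition ψ_i ⊙ g_j = Σ_{μ=1}^{N_μ} ξ_μ ψ_i(r_μ) g_j(r_μ) holds exactly for all 1 ≤ i ≤ N_e and 1 ≤ j ≤ m. For each i and μ, let ζ_{iμ} be the unique element of the range of Q solving Q(ε_i I − H)Q ζ_{iμ} = Q ξ_μ, and define W_μ = 2 Σ_{i=1}^{N_e} (ψ_i ⊙ ζ_{iμ}) ψ_i(r_μ). Then χ₀ g_j = Σ_{μ=1}^{N_μ}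 W_μ g_j(r_μ) for every 1 ≤ j ≤ m. -/

import Mathlib

open Matrix

/-!
Expand everything in the orthonormal eigenbasis `ψ`. The projector `Q` keeps exactly the
unoccupied components, and on their span `εᵢ - H` acts diagonally with entries `εᵢ - εₖ`, which
the gap keeps away from zero. Hence the constrained solution is `ζᵢμ = Rᵢ ξμ` with the
resolvent `Rᵢ = Σ_{k unoccupied} (εᵢ - εₖ)⁻¹ ψₖ ψₖᵀ`. On the other hand the Adler–Wiser sum
factors as `χ₀ g = 2 Σᵢ ψᵢ ⊙ Rᵢ (ψᵢ ⊙ g)`, and inserting the interpolative decomposition of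
`ψᵢ ⊙ g` and using linearity of `Rᵢ` gives `Σ_μ g(r_μ) W_μ`.
-/

theorem Matrix.vecMulVec_mulVec_eq_dotProduct_smul {R m n : Type*} [CommSemiring R] [Fintype n]
    (u : m → R) (v w : n → R) : vecMulVec u v *ᵥ w = (v ⬝ᵥ w) • u := by
  rw [vecMulVec_mulVec, op_smul_eq_smul]

section Hadamard

variable {R n ι κ : Type*} [CommSemiring R] [Fintype n]

theorem Matrix.vecMulVec_mul_self_mulVec (u v g : n → R) :
    vecMulVec (u * v) (u * v) *ᵥ g = u * (vecMulVec v v *ᵥ (u * g)) := by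
  have hdot : (u * v) ⬝ᵥ g = v ⬝ᵥ (u * g) := by
    simp only [dotProduct, Pi.mul_apply]
    exact Finset.sum_congr rfl fun _ _ => by ring
  rw [vecMulVec_mulVec_eq_dotProduct_smul, vecMulVec_mulVec_eq_dotProduct_smul, hdot,
    mul_smul_comm]

theorem Matrix.sum_sum_vecMulVec_mul_mulVec (s : Finset ι) (t : Finset κ) (c : ι → κ → R)
    (u : ι → n → R) (v : κ → n → R) (g : n → R) :
    (∑ i ∈ s, ∑ k ∈ t, c i k • vecMulVec (u i * v k) (u i * v k)) *ᵥ g =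
      ∑ i ∈ s, u i * ((∑ k ∈ t, c i k • vecMulVec (v k) (v k)) *ᵥ (u i * g)) := by
  simp only [sum_mulVec, smul_mulVec, vecMulVec_mul_self_mulVec, Finset.mul_sum, mul_smul_comm]

end Hadamard

section Orthonormal

variable {K n : Type*} [Field K] [Fintype n] [DecidableEq n] {ψ : n → n → K}

/-- The orthogonal projector onto the span of the `ψ k` with `k ∉ s`. -/
def complProj (ψ : n → n → K) (s : Finset n) : Matrix n n K :=
  1 - ∑ i ∈ s, vecMulVec (ψ i) (ψ i)

variable (horth : ∀ i j, ψ i ⬝ᵥ ψ j = if i = j then 1 else 0)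
include horth

theorem sum_vecMulVec_self_eq_one : ∑ k, vecMulVec (ψ k) (ψ k) = 1 := by
  have h : of ψ * (of ψ)ᵀ = 1 := by
    ext a b
    simpa [mul_apply, dotProduct, one_apply] using horth a b
  have h' : (of ψ)ᵀ * of ψ = 1 := mul_eq_one_comm.mp h
  ext a b
  simpa [mul_apply, vecMulVec_apply, Matrix.sum_apply] using congrFun (congrFun h' a) b

theorem sum_dotProduct_smul_eq_self (v : n → K) : ∑ k, (ψ k ⬝ᵥ v) • ψ k = v := by
  simpa [sum_mulVec, vecMulVec_mulVec_eq_dotProduct_smul] using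
    congrArg (· *ᵥ v) (sum_vecMulVec_self_eq_one horth)

theorem dotProduct_sum_smul {s : Finset n} (a : n → K) {k : n} (hk : k ∈ s) :
    ψ k ⬝ᵥ ∑ l ∈ s, a l • ψ l = a k := by
  simp [dotProduct_sum, horth, hk]

theorem complProj_mulVec (s : Finset n) (v : n → K) :
    complProj ψ s *ᵥ v = ∑ k ∈ sᶜ, (ψ k ⬝ᵥ v) • ψ k := by
  rw [complProj, sub_mulVec, one_mulVec, sub_eq_iff_eq_add, sum_mulVec]
  simp only [vecMulVec_mulVec_eq_dotProduct_smul]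
  rw [Finset.sum_compl_add_sum, sum_dotProduct_smul_eq_self horth]

theorem complProj_mulVec_sum_compl (s : Finset n) (a : n → K) :
    complProj ψ s *ᵥ ∑ k ∈ sᶜ, a k • ψ k = ∑ k ∈ sᶜ, a k • ψ k := by
  rw [complProj_mulVec horth]
  exact Finset.sum_congr rfl fun k hk => by rw [dotProduct_sum_smul horth a hk]

theorem eq_resolvent_mulVec {H : Matrix n n K} {ε : n → K} (heig : ∀ k, H *ᵥ ψ k = ε k • ψ k)
    {s : Finset n} {e : K} (he : ∀ k ∉ s, e ≠ ε k) {ζ ξ : n → K}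
    (hrange : ∃ w, ζ = complProj ψ s *ᵥ w)
    (hsol : (complProj ψ s * (e • 1 - H) * complProj ψ s) *ᵥ ζ = complProj ψ s *ᵥ ξ) :
    ζ = (∑ k ∈ sᶜ, (e - ε k)⁻¹ • vecMulVec (ψ k) (ψ k)) *ᵥ ξ := by
  obtain ⟨w, rfl⟩ := hrange
  set c : n → K := fun k => ψ k ⬝ᵥ w
  have hζ : complProj ψ s *ᵥ w = ∑ k ∈ sᶜ, c k • ψ k := complProj_mulVec horth s w
  have hdiag : (e • 1 - H) *ᵥ ∑ k ∈ sᶜ, c k • ψ k = ∑ k ∈ sᶜ, (c k * (e - ε k)) • ψ k := by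
    simp only [mulVec_sum, mulVec_smul, sub_mulVec, smul_mulVec, one_mulVec, heig, ← sub_smul,
      smul_smul]
  rw [← mulVec_mulVec, ← mulVec_mulVec, hζ, complProj_mulVec_sum_compl horth, hdiag,
    complProj_mulVec_sum_compl horth, complProj_mulVec horth] at hsol
  rw [hζ, sum_mulVec]
  refine Finset.sum_congr rfl fun k hk => ?_
  have hck : c k * (e - ε k) = ψ k ⬝ᵥ ξ := by
    simpa only [dotProduct_sum_smul horth _ hk] using congrArg (ψ k ⬝ᵥ ·) hsol
  rw [smul_mulVec, vecMulVec_mulVec_eq_dotProduct_smul, smul_smul, ← hck, mul_comm (c k),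
    inv_mul_cancel_left₀ (sub_ne_zero.mpr (he k (Finset.mem_compl.mp hk)))]

end Orthonormal

theorem Monotone.lt_of_gap {α : Type*} [Preorder α] {N Ne : ℕ} {ε : Fin N → α}
    (hmono : Monotone ε) (hlt : Ne < N) (hgap : ε ⟨Ne - 1, by omega⟩ < ε ⟨Ne, hlt⟩) {i k : Fin N}
    (hi : (i : ℕ) < Ne) (hk : Ne ≤ (k : ℕ)) : ε i < ε k :=
  (hmono (Fin.le_def.mpr (by simp only; omega))).trans_lt
    (hgap.trans_le (hmono (Fin.le_def.mpr hk)))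

/-- If the interpolative decomposition ψ_i ⊙ g_j = Σ_μ ξ_μ ψ_i(r_μ) g_j(r_μ)
holds exactly, and ζ_{iμ} ∈ range Q solves Q(ε_i I − H)Q ζ_{iμ} = Q ξ_μ, then with
W_μ = 2 Σ_i (ψ_i ⊙ ζ_{iμ}) ψ_i(r_μ) one has χ₀ g_j = Σ_μ W_μ g_j(r_μ) for all j. -/
theorem stmt8 (Ng Ne : ℕ) (hNe : 1 ≤ Ne) (hlt : Ne < Ng)
    (H : Matrix (Fin Ng) (Fin Ng) ℝ)
    (ψ : Fin Ng → Fin Ng → ℝ) (ε : Fin Ng → ℝ)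
    (horth : ∀ i j : Fin Ng, ψ i ⬝ᵥ ψ j = if i = j then (1 : ℝ) else 0)
    (heig : ∀ i : Fin Ng, H *ᵥ ψ i = ε i • ψ i)
    (hmono : Monotone ε)
    (hgap : ε ⟨Ne - 1, by omega⟩ < ε ⟨Ne, hlt⟩)
    (Q : Matrix (Fin Ng) (Fin Ng) ℝ)
    (hQ : Q = 1 - ∑ i ∈ Finset.univ.filter (fun i : Fin Ng => (i : ℕ) < Ne),
      vecMulVec (ψ i) (ψ i))
    (χ₀ : Matrix (Fin Ng) (Fin Ng) ℝ)
    (hχ₀ : χ₀ = (2 : ℝ) • ∑ i ∈ Finset.univ.filter (fun i : Fin Ng => (i : ℕ) < Ne),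
      ∑ j ∈ Finset.univ.filter (fun j : Fin Ng => Ne ≤ (j : ℕ)),
        (ε i - ε j)⁻¹ • vecMulVec (ψ i * ψ j) (ψ i * ψ j))
    (m Nμ : ℕ) (g : Fin m → Fin Ng → ℝ)
    (r : Fin Nμ → Fin Ng) (ξ : Fin Nμ → Fin Ng → ℝ)
    (hID : ∀ i : Fin Ng, (i : ℕ) < Ne → ∀ j : Fin m,
      ψ i * g j = ∑ μ : Fin Nμ, (ψ i (r μ) * g j (r μ)) • ξ μ)
    (ζ : Fin Ng → Fin Nμ → Fin Ng → ℝ)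
    (hrange : ∀ i : Fin Ng, (i : ℕ) < Ne → ∀ μ : Fin Nμ, ∃ w, ζ i μ = Q *ᵥ w)
    (hsol : ∀ i : Fin Ng, (i : ℕ) < Ne → ∀ μ : Fin Nμ,
      (Q * (ε i • (1 : Matrix (Fin Ng) (Fin Ng) ℝ) - H) * Q) *ᵥ ζ i μ = Q *ᵥ ξ μ)
    (W : Fin Nμ → Fin Ng → ℝ)
    (hW : ∀ μ : Fin Nμ, W μ = (2 : ℝ) •
      ∑ i ∈ Finset.univ.filter (fun i : Fin Ng => (i : ℕ) < Ne),
        ψ i (r μ) • (ψ i * ζ i μ)) :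
    ∀ j : Fin m, χ₀ *ᵥ g j = ∑ μ : Fin Nμ, g j (r μ) • W μ := by
  intro j
  subst hQ
  set F := Finset.univ.filter (fun i : Fin Ng => (i : ℕ) < Ne)
  have hF : ∀ {i}, i ∈ F ↔ (i : ℕ) < Ne := by simp [F]
  have hG : Finset.univ.filter (fun k : Fin Ng => Ne ≤ (k : ℕ)) = Fᶜ := by ext; simp [F]
  have hζ : ∀ i ∈ F, ∀ μ,
      ζ i μ = (∑ k ∈ Fᶜ, (ε i - ε k)⁻¹ • vecMulVec (ψ k) (ψ k)) *ᵥ ξ μ := fun i hi μ =>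
    eq_resolvent_mulVec horth heig
      (fun k hk => (hmono.lt_of_gap hlt hgap (hF.mp hi) (by simpa [hF] using hk)).ne)
      (hrange i (hF.mp hi) μ) (hsol i (hF.mp hi) μ)
  calc χ₀ *ᵥ g j
      = (2 : ℝ) • ∑ i ∈ F, ψ i *
          ((∑ k ∈ Fᶜ, (ε i - ε k)⁻¹ • vecMulVec (ψ k) (ψ k)) *ᵥ (ψ i * g j)) := by
        rw [hχ₀, hG, smul_mulVec, sum_sum_vecMulVec_mul_mulVec]
    _ = (2 : ℝ) • ∑ i ∈ F, ψ i * ∑ μ, (ψ i (r μ) * g j (r μ)) • ζ i μ := by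
        congr 1
        refine Finset.sum_congr rfl fun i hi => ?_
        simp only [hID i (hF.mp hi), mulVec_sum, mulVec_smul, ← hζ i hi]
    _ = ∑ μ, g j (r μ) • W μ := by
        simp only [hW, Finset.mul_sum, mul_smul_comm, Finset.smul_sum, smul_smul]
        rw [Finset.sum_comm]
        refine Finset.sum_congr rfl fun μ _ => Finset.sum_congr rfl fun i _ => ?_
        congr 1
        ring
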